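/- arXiv:math/0311091 — 2 statements merged into one kernel-verified Lean document; each statement's English description precedes it below -/
import Mathlib

section
/- Let (M_n) be a weight sequence and X a compact plane set. If f, g are infinitely complex-differentiable on X with Σ‖f^(n)‖_∞/M_n and Σ‖g^(n)‖_∞/M_n finite, then fg is infinitely differentiable and ‖fg‖_D ≤ ‖f‖_D ‖g‖_D, where ‖h‖_D = Σ_n ‖h^(n)‖_∞/M_n. (Use the Leibniz rule (fg)^(n) = Σ_k C(n,k) f^(k) g^(n−k) and the weight inequality M_n/(M_k M_{n−k}) ≥ C(n,k).) -/
/-- `F` is a sequence of iterated complex derivatives on the set `X`. -/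
def DerivSeqOn (F : ℕ → ℂ → ℂ) (X : Set ℂ) : Prop :=
  ∀ n, ∀ a ∈ X, HasDerivWithinAt (F n) (F (n + 1) a) X a

theorem stmt16 (X : Set ℂ) (hX : IsCompact X) (hXp : Perfect X)
    (M : ℕ → ℝ) (hpos : ∀ n, 0 < M n) (h0 : M 0 = 1)
    (hW : ∀ n m : ℕ, ((n + m).choose n : ℝ) * M n * M m ≤ M (n + m))
    (F G : ℕ → ℂ → ℂ) (hF : DerivSeqOn F X) (hG : DerivSeqOn G X)
    (hFsum : Summable fun n => (⨆ z : X, ‖F n (z : ℂ)‖) / M n)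
    (hGsum : Summable fun n => (⨆ z : X, ‖G n (z : ℂ)‖) / M n) :
    ∃ H : ℕ → ℂ → ℂ, (∀ z ∈ X, H 0 z = F 0 z * G 0 z) ∧ DerivSeqOn H X ∧
      Summable (fun n => (⨆ z : X, ‖H n (z : ℂ)‖) / M n) ∧
      (∑' n, (⨆ z : X, ‖H n (z : ℂ)‖) / M n) ≤
        (∑' n, (⨆ z : X, ‖F n (z : ℂ)‖) / M n) *
          (∑' n, (⨆ z : X, ‖G n (z : ℂ)‖) / M n) := by
  classical
  set H : ℕ → ℂ → ℂ :=
    fun n z => ∑ k ∈ Finset.range (n + 1), (n.choose k : ℂ) * (F k z * G (n - k) z) with hHdef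
  -- suprema
  set sF : ℕ → ℝ := fun n => ⨆ z : X, ‖F n (z : ℂ)‖ with hsF
  set sG : ℕ → ℝ := fun n => ⨆ z : X, ‖G n (z : ℂ)‖ with hsG
  have hFb : ∀ n, BddAbove (Set.range fun z : X => ‖F n (z : ℂ)‖) := by
    intro n
    obtain ⟨C, hC⟩ := hX.exists_bound_of_continuousOn
      (fun a ha => (hF n a ha).continuousWithinAt)
    exact ⟨C, by rintro _ ⟨z, rfl⟩; exact hC z z.2⟩
  have hGb : ∀ n, BddAbove (Set.range fun z : X => ‖G n (z : ℂ)‖) := by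
    intro n
    obtain ⟨C, hC⟩ := hX.exists_bound_of_continuousOn
      (fun a ha => (hG n a ha).continuousWithinAt)
    exact ⟨C, by rintro _ ⟨z, rfl⟩; exact hC z z.2⟩
  have hsF0 : ∀ n, 0 ≤ sF n := fun n => Real.iSup_nonneg fun z => norm_nonneg _
  have hsG0 : ∀ n, 0 ≤ sG n := fun n => Real.iSup_nonneg fun z => norm_nonneg _
  have hFle : ∀ n (z : X), ‖F n (z : ℂ)‖ ≤ sF n := fun n z => le_ciSup (hFb n) z
  have hGle : ∀ n (z : X), ‖G n (z : ℂ)‖ ≤ sG n := fun n z => le_ciSup (hGb n) z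
  set a : ℕ → ℝ := fun n => sF n / M n with ha
  set b : ℕ → ℝ := fun n => sG n / M n with hb
  have ha0 : ∀ n, 0 ≤ a n := fun n => div_nonneg (hsF0 n) (hpos n).le
  have hb0 : ∀ n, 0 ≤ b n := fun n => div_nonneg (hsG0 n) (hpos n).le
  have haN : (fun n => ‖a n‖) = a := funext fun n => Real.norm_of_nonneg (ha0 n)
  have hbN : (fun n => ‖b n‖) = b := funext fun n => Real.norm_of_nonneg (hb0 n)
  have haS : Summable fun n => ‖a n‖ := by rw [haN]; exact hFsum
  have hbS : Summable fun n => ‖b n‖ := by rw [hbN]; exact hGsum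
  -- the key choose inequality
  have key : ∀ n k : ℕ, k ≤ n → (n.choose k : ℝ) * M k * M (n - k) ≤ M n := by
    intro n k hk
    have := hW k (n - k)
    rwa [Nat.add_sub_cancel' hk] at this
  -- bound on sup of H n
  have hHb : ∀ n, (⨆ z : X, ‖H n (z : ℂ)‖) / M n ≤
      ∑ k ∈ Finset.range (n + 1), a k * b (n - k) := by
    intro n
    rw [div_le_iff₀ (hpos n)]
    apply Real.iSup_le
    · intro z
      calc ‖H n (z : ℂ)‖ ≤ ∑ k ∈ Finset.range (n + 1),
            ‖(n.choose k : ℂ) * (F k (z : ℂ) * G (n - k) (z : ℂ))‖ := norm_sum_le _ _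
        _ ≤ ∑ k ∈ Finset.range (n + 1), a k * b (n - k) * M n := by
            apply Finset.sum_le_sum
            intro k hk
            have hk' : k ≤ n := Nat.lt_succ_iff.mp (Finset.mem_range.mp hk)
            have h1 : ‖(n.choose k : ℂ) * (F k (z : ℂ) * G (n - k) (z : ℂ))‖
                = (n.choose k : ℝ) * (‖F k (z : ℂ)‖ * ‖G (n - k) (z : ℂ)‖) := by
              rw [norm_mul, norm_mul]
              norm_num
            rw [h1]
            have h2 : (n.choose k : ℝ) * (‖F k (z : ℂ)‖ * ‖G (n - k) (z : ℂ)‖)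
                ≤ (n.choose k : ℝ) * (sF k * sG (n - k)) := by
              apply mul_le_mul_of_nonneg_left _ (by positivity)
              exact mul_le_mul (hFle k z) (hGle (n - k) z) (norm_nonneg _) (hsF0 k)
            refine h2.trans ?_
            have h3 : (n.choose k : ℝ) ≤ M n / (M k * M (n - k)) := by
              rw [le_div_iff₀ (mul_pos (hpos k) (hpos (n - k)))]
              have := key n k hk'
              nlinarith [this]
            have heq : a k * b (n - k) * M n
                = M n / (M k * M (n - k)) * (sF k * sG (n - k)) := by
              field_simp [ha, hb]
              ring
            rw [heq]
            exact mul_le_mul_of_nonneg_right h3 (mul_nonneg (hsF0 k) (hsG0 (n - k)))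
        _ = (∑ k ∈ Finset.range (n + 1), a k * b (n - k)) * M n := by
            rw [Finset.sum_mul]
    · have : 0 ≤ ∑ k ∈ Finset.range (n + 1), a k * b (n - k) :=
        Finset.sum_nonneg fun k _ => mul_nonneg (ha0 k) (hb0 _)
      exact mul_nonneg this (hpos n).le
  -- Cauchy product summability
  have hcS : Summable fun n => ∑ k ∈ Finset.range (n + 1), a k * b (n - k) :=
    (summable_norm_sum_mul_range_of_summable_norm haS hbS).of_norm
  have hHsumS : Summable fun n => (⨆ z : X, ‖H n (z : ℂ)‖) / M n := by
    apply Summable.of_nonneg_of_le _ hHb hcS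
    intro n
    exact div_nonneg (Real.iSup_nonneg fun z => norm_nonneg _) (hpos n).le
  refine ⟨H, ?_, ?_, hHsumS, ?_⟩
  · intro z hz
    simp [hHdef]
  · intro n x hx
    have hterm : ∀ k ∈ Finset.range (n + 1), HasDerivWithinAt
        (fun z => (n.choose k : ℂ) * (F k z * G (n - k) z))
        ((n.choose k : ℂ) * (F (k + 1) x * G (n - k) x + F k x * G (n - k + 1) x)) X x := by
      intro k _
      exact ((hF k x hx).mul (hG (n - k) x hx)).const_mul _
    have hsum := HasDerivWithinAt.sum hterm
    have hid : H (n + 1) x = ∑ k ∈ Finset.range (n + 1),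
        (n.choose k : ℂ) * (F (k + 1) x * G (n - k) x + F k x * G (n - k + 1) x) := by
      have h1 := Finset.sum_choose_succ_mul (R := ℂ) (fun i j => F i x * G j x) n
      have h2 : H (n + 1) x = ∑ i ∈ Finset.range (n + 2),
          ((n + 1).choose i : ℂ) * (F i x * G (n + 1 - i) x) := rfl
      rw [h2, h1]
      rw [← Finset.sum_add_distrib]
      apply Finset.sum_congr rfl
      intro i hi
      have hi' : i ≤ n := Nat.lt_succ_iff.mp (Finset.mem_range.mp hi)
      rw [mul_add]
      rw [Nat.succ_sub hi']
      ring
    rw [hid]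
    rw [Finset.sum_fn] at hsum
    exact hsum
  · have htsum : (∑' n, a n) * (∑' n, b n)
        = ∑' n, ∑ k ∈ Finset.range (n + 1), a k * b (n - k) :=
      tsum_mul_tsum_eq_tsum_sum_range_of_summable_norm haS hbS
    calc (∑' n, (⨆ z : X, ‖H n (z : ℂ)‖) / M n)
        ≤ ∑' n, ∑ k ∈ Finset.range (n + 1), a k * b (n - k) :=
          Summable.tsum_le_tsum hHb hHsumS hcS
      _ = (∑' n, a n) * (∑' n, b n) := htsum.symm
end

section
/- Let T : A → B be a unital algebra homomorphism between commutative semisimple unital Banach algebras. Then T is automatically continuous. -/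
theorem stmt17 (A B : Type*) [NormedCommRing A] [NormedAlgebra ℂ A] [CompleteSpace A]
    [NormedCommRing B] [NormedAlgebra ℂ B] [CompleteSpace B]
    (hsemisimple : Ideal.jacobson (⊥ : Ideal B) = ⊥)
    (T : A →ₐ[ℂ] B) : Continuous T := by
  -- An element of B killed by every character is zero (semisimplicity).
  have key : ∀ b : B, (∀ φ : B →ₐ[ℂ] ℂ, φ b = 0) → b = 0 := by
    intro b hb
    by_contra h
    have hb' : b ∉ Ideal.jacobson (⊥ : Ideal B) := by
      rw [hsemisimple]; simpa using h
    rw [Ideal.jacobson, Ideal.mem_sInf] at hb'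
    push_neg at hb'
    obtain ⟨M, hM, hbM⟩ := hb'
    haveI hMmax : M.IsMaximal := hM.2
    set ψ : B →ₐ[ℂ] ℂ := WeakDual.CharacterSpace.equivAlgHom M.toCharacterSpace with hψ
    have hle : M ≤ RingHom.ker (ψ : B →+* ℂ) := by
      intro x hx
      have := Ideal.toCharacterSpace_apply_eq_zero_of_mem (I := M) hx
      simpa [RingHom.mem_ker, hψ] using this
    have hne : RingHom.ker (ψ : B →+* ℂ) ≠ ⊤ := by
      intro htop
      have h1 : (1 : B) ∈ RingHom.ker (ψ : B →+* ℂ) := htop ▸ Submodule.mem_top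
      rw [RingHom.mem_ker] at h1
      simp at h1
    have heq : M = RingHom.ker (ψ : B →+* ℂ) := hMmax.eq_of_le hne hle
    exact hbM (heq ▸ (RingHom.mem_ker.mpr (hb ψ)))
  have : Continuous T.toLinearMap := by
    apply LinearMap.continuous_of_seq_closed_graph
    intro u x y hu hTu
    have hzero : ∀ φ : B →ₐ[ℂ] ℂ, φ (y - T x) = 0 := by
      intro φ
      have h1 : Filter.Tendsto (fun n => φ (T (u n))) Filter.atTop (nhds (φ (T x))) := by
        have hc : Continuous (φ.comp T) := map_continuous (φ.comp T)
        exact (hc.tendsto x).comp hu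
      have h2 : Filter.Tendsto (fun n => φ (T (u n))) Filter.atTop (nhds (φ y)) :=
        ((map_continuous φ).tendsto y).comp hTu
      have := tendsto_nhds_unique h2 h1
      simp [map_sub, this]
    have := key _ hzero
    exact (sub_eq_zero.mp this)
  exact this
end
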